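/- arXiv:1907.05320 — 12 statements merged into one kernel-verified Lean document; each statement's English description precedes it below -/
import Mathlib

section
/- Let σ : 2^T → 2^S and τ : 2^S → 2^T form a Galois connection between the powersets of S and T ordered by inclusion, with τ the lower adjoint and σ the upper adjoint. Then for any predicates sat_S : Prog_S → 2^S → Prop and sat_T : Prog_T → 2^T → Prop defined via trace semantics (W ⊨ π iff every trace of W is in π), and any compiler ↓ : Prog_S → Prog_T, the criterion TP_τ (for all π_S and W, W ⊨ π_S implies ↓W ⊨ τ(π_S)) holds if and only if the criterion TP_σ (for all π_T and W, W ⊨ σ(π_T) implies ↓W ⊨ π_T) holds. -/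
/-- equivalence of TP_τ and TP_σ for a Galois connection (τ lower, σ upper). -/
theorem tp_tau_iff_tp_sigma {S T ProgS ProgT : Type*}
    (semS : ProgS → S → Prop) (semT : ProgT → T → Prop)
    (compile : ProgS → ProgT)
    (τ : Set S → Set T) (σ : Set T → Set S)
    (hadj : ∀ (πS : Set S) (πT : Set T), τ πS ⊆ πT ↔ πS ⊆ σ πT) :
    (∀ (πS : Set S) (W : ProgS),
        (∀ s, semS W s → s ∈ πS) → ∀ t, semT (compile W) t → t ∈ τ πS) ↔
      (∀ (πT : Set T) (W : ProgS),
        (∀ s, semS W s → s ∈ σ πT) → ∀ t, semT (compile W) t → t ∈ πT) := by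
  constructor
  · intro h πT W hW t ht
    exact (hadj (σ πT) πT).mpr (subset_refl _) (h (σ πT) W hW t ht)
  · intro h πS W hW t ht
    exact h (τ πS) W (fun s hs => (hadj πS (τ πS)).mp (subset_refl _) (hW s hs)) t ht
end

section
/- Let ∼ ⊆ TraceS × TraceT be a trace relation with existential image τ̃ and universal image σ̃. For a compiler ↓, the trace-relating compiler correctness criterion CC∼ (for every source program W and target trace t, if ↓W ⇝ t then there exists a source trace s with s ∼ t and W ⇝ s) is equivalent to TP_τ̃ (for every trace property π_S ⊆ TraceS and every W, if W satisfies π_S then ↓W satisfies τ̃(π_S)), and also equivalent to TP_σ̃ (for every π_T ⊆ TraceT and every W, if W satisfies σ̃(π_T) then ↓W satisfies π_T). -/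
/-- trinitarian view: CC∼ is equivalent to TP_τ̃ and to TP_σ̃. -/
theorem trinitarian_view {ProgS ProgT TraceS TraceT : Type*}
    (semS : ProgS → TraceS → Prop) (semT : ProgT → TraceT → Prop)
    (compile : ProgS → ProgT) (rel : TraceS → TraceT → Prop) :
    ((∀ (W : ProgS) (t : TraceT), semT (compile W) t → ∃ s, rel s t ∧ semS W s) ↔
      (∀ (πS : Set TraceS) (W : ProgS), (∀ s, semS W s → s ∈ πS) →
        ∀ t, semT (compile W) t → t ∈ {t | ∃ s ∈ πS, rel s t})) ∧
    ((∀ (W : ProgS) (t : TraceT), semT (compile W) t → ∃ s, rel s t ∧ semS W s) ↔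
      (∀ (πT : Set TraceT) (W : ProgS),
        (∀ s, semS W s → s ∈ {s | ∀ t, rel s t → t ∈ πT}) →
        ∀ t, semT (compile W) t → t ∈ πT)) := by
  constructor
  · constructor
    · intro cc πS W hW t ht
      obtain ⟨s, hst, hs⟩ := cc W t ht
      exact ⟨s, hW s hs, hst⟩
    · intro tp W t ht
      obtain ⟨s, hs, hst⟩ := tp {s | semS W s} W (fun s h => h) t ht
      exact ⟨s, hst, hs⟩
  · constructor
    · intro cc πT W hW t ht
      obtain ⟨s, hst, hs⟩ := cc W t ht
      exact hW s hs t hst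
    · intro tp W t ht
      by_contra h
      push_neg at h
      exact (tp {t' | ∃ s, rel s t' ∧ semS W s} W
        (fun s hs t' hst => ⟨s, hst, hs⟩) t ht).elim
        (fun s hs => h s hs.1 hs.2)
end

section
/- Let ∼ be a trace relation with existential image τ̃ and universal image σ̃ lifted to hyperproperty mappings (applied elementwise to sets of trace properties), and let Cl_⊆(H) = { π | ∃ π' ∈ H, π ⊆ π' } denote subset-closure. Then the trace-relating compiler correctness criterion CC∼ is equivalent to: for every subset-closed source hyperproperty H_S, every W satisfying H_S compiles to ↓W satisfying Cl_⊆(τ̃(H_S)); and also equivalent to: for every subset-closed target hyperproperty H_T, every W satisfying Cl_⊆(σ̃(H_T)) compiles to ↓W satisfying H_T. -/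
/-- Existential image of a relation on trace properties. -/
def exIm {S T : Type*} (r : S → T → Prop) (π : Set S) : Set T :=
  {t | ∃ s ∈ π, r s t}

/-- Universal image of a relation on trace properties. -/
def univIm {S T : Type*} (r : S → T → Prop) (π' : Set T) : Set S :=
  {s | ∀ t, r s t → t ∈ π'}

/-- Subset-closure of a hyperproperty. -/
def Cl {A : Type*} (H : Set (Set A)) : Set (Set A) :=
  {π | ∃ π' ∈ H, π ⊆ π'}

/-- A hyperproperty is subset-closed. -/
def SSC {A : Type*} (H : Set (Set A)) : Prop :=
  ∀ π ∈ H, ∀ π' ⊆ π, π' ∈ H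

/-- CC∼ is equivalent to the preservation of subset-closed
hyperproperties via Cl_⊆ ∘ τ̃, and to the version via Cl_⊆ ∘ σ̃. -/
theorem ssch_trinity {ProgS ProgT TraceS TraceT : Type*}
    (semS : ProgS → TraceS → Prop) (semT : ProgT → TraceT → Prop)
    (compile : ProgS → ProgT) (rel : TraceS → TraceT → Prop) :
    ((∀ (W : ProgS) (t : TraceT), semT (compile W) t → ∃ s, rel s t ∧ semS W s) ↔
      (∀ (W : ProgS) (HS : Set (Set TraceS)), SSC HS →
        {s | semS W s} ∈ HS →
        {t | semT (compile W) t} ∈ Cl (exIm rel '' HS))) ∧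
    ((∀ (W : ProgS) (t : TraceT), semT (compile W) t → ∃ s, rel s t ∧ semS W s) ↔
      (∀ (W : ProgS) (HT : Set (Set TraceT)), SSC HT →
        {s | semS W s} ∈ Cl (univIm rel '' HT) →
        {t | semT (compile W) t} ∈ HT)) := by
  constructor
  · constructor
    · intro cc W HS _ hbeh
      exact ⟨exIm rel {s | semS W s}, ⟨_, hbeh, rfl⟩,
        fun t ht => let ⟨s, hr, hs⟩ := cc W t ht; ⟨s, hs, hr⟩⟩
    · intro h W t ht
      obtain ⟨π', ⟨π, hπ, rfl⟩, hsub⟩ :=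
        h W {π | π ⊆ {s | semS W s}} (fun a ha b hb => hb.trans ha)
          (fun _ hs => hs)
      obtain ⟨s, hs, hrel⟩ := hsub ht
      exact ⟨s, hrel, hπ hs⟩
  · constructor
    · intro cc W HT hssc hbeh
      obtain ⟨π', ⟨π, hπ, rfl⟩, hsub⟩ := hbeh
      refine hssc π hπ _ (fun t ht => ?_)
      obtain ⟨s, hrel, hs⟩ := cc W t ht
      exact hsub hs t hrel
    · intro h W t ht
      have := h W {π | π ⊆ exIm rel {s | semS W s}}
        (fun a ha b hb => hb.trans ha)
        ⟨univIm rel (exIm rel {s | semS W s}),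
          ⟨exIm rel {s | semS W s}, fun _ hs => hs, rfl⟩,
          fun s hs t' hrel => ⟨s, hs, hrel⟩⟩
      obtain ⟨s, hs, hrel⟩ := this ht
      exact ⟨s, hrel, hs⟩
end

section
/- Consider the undefined-behavior trace relation: source and target traces are finite or infinite sequences over an alphabet Σ containing a terminal event Goes_wrong, and s ∼ t iff s = t or there exists a finite prefix m of t with s = m·Goes_wrong. Then the universal image of a target property π_T is σ̃(π_T) = { s ∈ π_T | s is not of the form m·Goes_wrong } ∪ { m·Goes_wrong | ∀ t, m ≤ t → t ∈ π_T }, and the existential image of a source property π_S is τ̃(π_S) = { t | t ∈ π_S } ∪ { t | ∃ m ≤ t, m·Goes_wrong ∈ π_S }. -/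
/-- Traces over alphabet `E` extended with a terminal `Goes_wrong` event:
finite traces, traces ending in `Goes_wrong`, and infinite traces. -/
inductive UTrace (E : Type) : Type
  | fin (l : List E)
  | wrong (l : List E)
  | inf (f : ℕ → E)

/-- `m` is a finite prefix of the trace `t`. -/
def upref {E : Type} (m : List E) : UTrace E → Prop
  | .fin l => m <+: l
  | .wrong l => m <+: l
  | .inf f => ∀ i : Fin m.length, m.get i = f i

/-- The undefined-behavior trace relation: `s ∼ t` iff `s = t` or `s` is a
prefix of `t` followed by `Goes_wrong`. -/
def urel {E : Type} (s t : UTrace E) : Prop :=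
  s = t ∨ ∃ m, upref m t ∧ s = UTrace.wrong m

/-- characterization of the universal and existential images
induced by the undefined-behavior relation. -/
theorem undef_behavior_images (E : Type) :
    (∀ πT : Set (UTrace E),
      {s | ∀ t, urel s t → t ∈ πT} =
        {s | s ∈ πT ∧ ∀ m : List E, s ≠ UTrace.wrong m} ∪
        {s | ∃ m : List E, s = UTrace.wrong m ∧ ∀ t, upref m t → t ∈ πT}) ∧
    (∀ πS : Set (UTrace E),
      {t | ∃ s ∈ πS, urel s t} =
        {t | t ∈ πS} ∪ {t | ∃ m : List E, upref m t ∧ UTrace.wrong m ∈ πS}) := by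
  constructor
  · intro πT
    ext s
    simp only [Set.mem_setOf_eq, Set.mem_union]
    constructor
    · intro h
      rcases s with l | m | f
      · exact Or.inl ⟨h _ (Or.inl rfl), fun m hm => by cases hm⟩
      · exact Or.inr ⟨m, rfl, fun t ht => h t (Or.inr ⟨m, ht, rfl⟩)⟩
      · exact Or.inl ⟨h _ (Or.inl rfl), fun m hm => by cases hm⟩
    · rintro (⟨hs, hnw⟩ | ⟨m, rfl, hm⟩) t ht
      · rcases ht with rfl | ⟨m, _, rfl⟩
        · exact hs
        · exact absurd rfl (hnw m)
      · rcases ht with rfl | ⟨m', hm', heq⟩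
        · exact hm _ (List.prefix_refl m)
        · cases heq; exact hm _ hm'
  · intro πS
    ext t
    simp only [Set.mem_setOf_eq, Set.mem_union]
    constructor
    · rintro ⟨s, hs, rfl | ⟨m, hm, rfl⟩⟩
      · exact Or.inl hs
      · exact Or.inr ⟨m, hm, hs⟩
    · rintro (ht | ⟨m, hm, hw⟩)
      · exact ⟨t, ht, Or.inl rfl⟩
      · exact ⟨_, hw, Or.inr ⟨m, hm, rfl⟩⟩
end

section
/- Let ∼ be a trace relation with induced property mappings τ̃ and σ̃ (existential and universal images). Then the robust trace-relating compilation criterion RTC∼ (for every partial source program P, every target context C_T, and every target trace t, if C_T[↓P] ⇝ t then there exist a source context C_S and a source trace s with s ∼ t and C_S[P] ⇝ s) is equivalent to RTP_τ̃ (for every P and source property π_S, if P robustly satisfies π_S then ↓P robustly satisfies τ̃(π_S)) and also equivalent to RTP_σ̃ (for every P and target property π_T, if P robustly satisfies σ̃(π_T) then ↓P robustly satisfies π_T). -/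
/-- trinity for robust trace properties: RTC∼ ↔ RTP_τ̃ and
RTC∼ ↔ RTP_σ̃. -/
theorem robust_trace_trinity {PartS CtxS PartT CtxT TraceS TraceT : Type*}
    (semS : CtxS → PartS → TraceS → Prop) (semT : CtxT → PartT → TraceT → Prop)
    (compile : PartS → PartT) (rel : TraceS → TraceT → Prop) :
    ((∀ (P : PartS) (Ct : CtxT) (t : TraceT), semT Ct (compile P) t →
        ∃ (Cs : CtxS) (s : TraceS), rel s t ∧ semS Cs P s) ↔
      (∀ (P : PartS) (πS : Set TraceS),
        (∀ (Cs : CtxS) (s : TraceS), semS Cs P s → s ∈ πS) →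
        (∀ (Ct : CtxT) (t : TraceT), semT Ct (compile P) t → t ∈ {t | ∃ s ∈ πS, rel s t}))) ∧
    ((∀ (P : PartS) (Ct : CtxT) (t : TraceT), semT Ct (compile P) t →
        ∃ (Cs : CtxS) (s : TraceS), rel s t ∧ semS Cs P s) ↔
      (∀ (P : PartS) (πT : Set TraceT),
        (∀ (Cs : CtxS) (s : TraceS), semS Cs P s → s ∈ {s | ∀ t, rel s t → t ∈ πT}) →
        (∀ (Ct : CtxT) (t : TraceT), semT Ct (compile P) t → t ∈ πT))) := by
  constructor
  · constructor
    · intro h P πS hrob Ct t ht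
      obtain ⟨Cs, s, hrel, hs⟩ := h P Ct t ht
      exact ⟨s, hrob Cs s hs, hrel⟩
    · intro h P Ct t ht
      have := h P {s | ∃ Cs, semS Cs P s} (fun Cs s hs => ⟨Cs, hs⟩) Ct t ht
      obtain ⟨s, ⟨Cs, hs⟩, hrel⟩ := this
      exact ⟨Cs, s, hrel, hs⟩
  · constructor
    · intro h P πT hrob Ct t ht
      obtain ⟨Cs, s, hrel, hs⟩ := h P Ct t ht
      exact hrob Cs s hs t hrel
    · intro h P Ct t ht
      exact h P {t' | ∃ Cs s, rel s t' ∧ semS Cs P s}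
        (fun Cs s hs t' hr => ⟨Cs, s, hr, hs⟩) Ct t ht
end

section
/- Let ∼ be a trace relation, σ̃ its universal image, and Safe(π) = ⋂ { S ∈ Safety_T | π ⊆ S } the smallest target safety property containing π. Then the robust safety criterion RSC∼ (for every partial source program P, target context C_T, target trace t and finite prefix m ≤ t, if C_T[↓P] ⇝ t then there exist a source context C_S, a target trace t' ≥ m, and a source trace s ∼ t' with C_S[P] ⇝ s) is equivalent to: for every P and every target safety property π_T, if P robustly satisfies σ̃(π_T) then ↓P robustly satisfies π_T; and also equivalent to: for every P and arbitrary source property π_S, if P robustly satisfies π_S then ↓P robustly satisfies Safe(τ̃(π_S)). -/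
/-- Target traces: finite or infinite sequences over `E`. -/
inductive Tr (E : Type) : Type
  | fin (l : List E)
  | inf (f : ℕ → E)

/-- `m` is a finite prefix of the trace `t`. -/
def pref {E : Type} (m : List E) : Tr E → Prop
  | .fin l => m <+: l
  | .inf f => ∀ i : Fin m.length, m.get i = f i

/-- A target trace property is a safety property. -/
def SafetyT {E : Type} (π : Set (Tr E)) : Prop :=
  ∀ t ∉ π, ∃ m : List E, pref m t ∧ ∀ t', pref m t' → t' ∉ π

/-- The smallest target safety property containing `π`. -/
def Safe {E : Type} (π : Set (Tr E)) : Set (Tr E) :=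
  ⋂₀ {S | SafetyT S ∧ π ⊆ S}

/-- trinity for robust safety properties: RSC∼ ↔ RSP_σ̃ and
RSC∼ ↔ (Safe ∘ τ̃)-robust-preservation. -/
theorem robust_safety_trinity {E : Type} {PartS CtxS PartT CtxT TraceS : Type}
    (semS : CtxS → PartS → TraceS → Prop) (semT : CtxT → PartT → Tr E → Prop)
    (compile : PartS → PartT) (rel : TraceS → Tr E → Prop) :
    ((∀ (P : PartS) (Ct : CtxT) (t : Tr E) (m : List E),
        pref m t → semT Ct (compile P) t →
        ∃ (Cs : CtxS) (t' : Tr E), pref m t' ∧ ∃ s, rel s t' ∧ semS Cs P s) ↔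
      (∀ (P : PartS) (πT : Set (Tr E)), SafetyT πT →
        (∀ (Cs : CtxS) (s : TraceS), semS Cs P s → s ∈ {s | ∀ t, rel s t → t ∈ πT}) →
        (∀ (Ct : CtxT) (t : Tr E), semT Ct (compile P) t → t ∈ πT))) ∧
    ((∀ (P : PartS) (Ct : CtxT) (t : Tr E) (m : List E),
        pref m t → semT Ct (compile P) t →
        ∃ (Cs : CtxS) (t' : Tr E), pref m t' ∧ ∃ s, rel s t' ∧ semS Cs P s) ↔
      (∀ (P : PartS) (πS : Set TraceS),
        (∀ (Cs : CtxS) (s : TraceS), semS Cs P s → s ∈ πS) →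
        (∀ (Ct : CtxT) (t : Tr E), semT Ct (compile P) t →
          t ∈ Safe {t | ∃ s ∈ πS, rel s t}))) := by
  have hsafe : ∀ m : List E, SafetyT {t' : Tr E | ¬ pref m t'} := by
    intro m t ht
    refine ⟨m, not_not.mp ht, fun t' h h' => h' h⟩
  constructor
  · constructor
    · intro rsc P πT hπ hrob Ct t ht
      by_contra htn
      obtain ⟨m, hm, hbad⟩ := hπ t htn
      obtain ⟨Cs, t', hm', s, hrel, hsem⟩ := rsc P Ct t m hm ht
      exact hbad t' hm' (hrob Cs s hsem t' hrel)
    · intro rsp P Ct t m hm ht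
      by_contra hc
      push_neg at hc
      have := rsp P {t' | ¬ pref m t'} (hsafe m)
        (fun Cs s hsem t' hrel hp => hc Cs t' hp s hrel hsem) Ct t ht
      exact this hm
  · constructor
    · intro rsc P πS hrob Ct t ht
      intro S hS
      by_contra htn
      obtain ⟨m, hm, hbad⟩ := hS.1 t htn
      obtain ⟨Cs, t', hm', s, hrel, hsem⟩ := rsc P Ct t m hm ht
      exact hbad t' hm' (hS.2 ⟨s, hrob Cs s hsem, hrel⟩)
    · intro rtp P Ct t m hm ht
      by_contra hc
      push_neg at hc
      have := rtp P {s | ∃ Cs, semS Cs P s} (fun Cs s hsem => ⟨Cs, hsem⟩) Ct t ht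
      have : t ∈ {t' : Tr E | ¬ pref m t'} := by
        refine this _ ⟨hsafe m, ?_⟩
        rintro t' ⟨s, ⟨Cs, hsem⟩, hrel⟩ hp
        exact hc Cs t' hp s hrel hsem
      exact this hm
end

section
/- Let ∼ be a trace relation with hyperproperty-level mappings τ̃ and σ̃ (lifting the existential and universal images elementwise to sets of trace properties). Then: (1) the robust hyperproperty criterion RHC∼ (for every partial program P and target context C_T there exists a source context C_S such that for all target traces t, C_T[↓P] ⇝ t iff there exists s ∼ t with C_S[P] ⇝ s) is equivalent to RHP_τ̃ (for every P and source hyperproperty H_S, if P robustly satisfies H_S then ↓P robustly satisfies τ̃(H_S)); (2) if τ̃ ∘ σ̃ = id (Galois insertion) then RHC∼ implies RHP_σ̃ (for every P and target hyperproperty H_T, if P robustly satisfies σ̃(H_T) then ↓P robustly satisfies H_T); (3) if σ̃ ∘ τ̃ = id (Galois reflection) then RHP_σ̃ implies RHC∼. -/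
/-- weak trinity for robust hyperproperty preservation:
(1) RHC∼ ↔ RHP_τ̃; (2) Galois insertion implies RHC∼ → RHP_σ̃;
(3) Galois reflection implies RHP_σ̃ → RHC∼. -/
theorem robust_hyper_weak_trinity {PartS CtxS PartT CtxT TraceS TraceT : Type*}
    (semS : CtxS → PartS → TraceS → Prop) (semT : CtxT → PartT → TraceT → Prop)
    (compile : PartS → PartT) (rel : TraceS → TraceT → Prop) :
    ((∀ (P : PartS) (Ct : CtxT), ∃ Cs : CtxS,
        ∀ t : TraceT, semT Ct (compile P) t ↔ ∃ s, rel s t ∧ semS Cs P s) ↔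
      (∀ (P : PartS) (HS : Set (Set TraceS)),
        (∀ Cs : CtxS, {s | semS Cs P s} ∈ HS) →
        (∀ Ct : CtxT, {t | semT Ct (compile P) t} ∈ exIm rel '' HS))) ∧
    ((∀ πT : Set TraceT, exIm rel (univIm rel πT) = πT) →
      (∀ (P : PartS) (Ct : CtxT), ∃ Cs : CtxS,
        ∀ t : TraceT, semT Ct (compile P) t ↔ ∃ s, rel s t ∧ semS Cs P s) →
      (∀ (P : PartS) (HT : Set (Set TraceT)),
        (∀ Cs : CtxS, {s | semS Cs P s} ∈ univIm rel '' HT) →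
        (∀ Ct : CtxT, {t | semT Ct (compile P) t} ∈ HT))) ∧
    ((∀ πS : Set TraceS, univIm rel (exIm rel πS) = πS) →
      (∀ (P : PartS) (HT : Set (Set TraceT)),
        (∀ Cs : CtxS, {s | semS Cs P s} ∈ univIm rel '' HT) →
        (∀ Ct : CtxT, {t | semT Ct (compile P) t} ∈ HT)) →
      (∀ (P : PartS) (Ct : CtxT), ∃ Cs : CtxS,
        ∀ t : TraceT, semT Ct (compile P) t ↔ ∃ s, rel s t ∧ semS Cs P s)) := by
  refine ⟨⟨fun rhc P HS hHS Ct => ?_, fun rhp P Ct => ?_⟩,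
    fun gal rhc P HT hHT Ct => ?_, fun gal rhp P Ct => ?_⟩
  · obtain ⟨Cs, hCs⟩ := rhc P Ct
    exact ⟨{s | semS Cs P s}, hHS Cs, by
      ext t; simp only [exIm, Set.mem_setOf_eq]
      constructor
      · rintro ⟨s, hs, hr⟩; exact (hCs t).2 ⟨s, hr, hs⟩
      · intro h; obtain ⟨s, hr, hs⟩ := (hCs t).1 h; exact ⟨s, hs, hr⟩⟩
  · have := rhp P (Set.range fun Cs => {s | semS Cs P s}) (fun Cs => ⟨Cs, rfl⟩) Ct
    obtain ⟨π, ⟨Cs, rfl⟩, hπ⟩ := this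
    have hπ : exIm rel {s | semS Cs P s} = {t | semT Ct (compile P) t} := hπ
    refine ⟨Cs, fun t => ?_⟩
    constructor
    · intro h
      have : t ∈ {t | semT Ct (compile P) t} := h
      rw [← hπ] at this
      obtain ⟨s, hs, hr⟩ := this; exact ⟨s, hr, hs⟩
    · rintro ⟨s, hr, hs⟩
      have : t ∈ exIm rel {s | semS Cs P s} := ⟨s, hs, hr⟩
      rw [hπ] at this; exact this
  · obtain ⟨Cs, hCs⟩ := rhc P Ct
    obtain ⟨πT, hπT, heq⟩ := hHT Cs
    have : {t | semT Ct (compile P) t} = πT := by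
      rw [← gal πT, heq]
      ext t; simp only [exIm, Set.mem_setOf_eq]
      constructor
      · intro h; obtain ⟨s, hr, hs⟩ := (hCs t).1 h; exact ⟨s, hs, hr⟩
      · rintro ⟨s, hs, hr⟩; exact (hCs t).2 ⟨s, hr, hs⟩
    exact this ▸ hπT
  · have := rhp P (Set.range fun Cs => exIm rel {s | semS Cs P s})
      (fun Cs => ⟨exIm rel {s | semS Cs P s}, ⟨Cs, rfl⟩, gal _⟩) Ct
    obtain ⟨Cs, hCs⟩ := this
    have hCs : exIm rel {s | semS Cs P s} = {t | semT Ct (compile P) t} := hCs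
    refine ⟨Cs, fun t => ?_⟩
    constructor
    · intro h
      have : t ∈ {t | semT Ct (compile P) t} := h
      rw [← hCs] at this
      obtain ⟨s, hs, hr⟩ := this; exact ⟨s, hr, hs⟩
    · rintro ⟨s, hr, hs⟩
      have : t ∈ exIm rel {s | semS Cs P s} := ⟨s, hs, hr⟩
      rw [hCs] at this; exact this
end

section
/- Let ∼ be a trace relation with τ̃ and σ̃ its existential and universal images lifted to hyperproperties. Then: (1) HC∼ (for every W, beh(↓W) = τ̃(beh(W))) is equivalent to HP_τ̃ (for every W and source hyperproperty H_S, W satisfies H_S implies ↓W satisfies τ̃(H_S)). (2) If τ̃ ∘ σ̃ = id on trace properties, then HC∼ implies HP_σ̃ (for every W and target hyperproperty H_T, W satisfies σ̃(H_T) implies ↓W satisfies H_T). (3) If σ̃ ∘ τ̃ = id on trace properties, then HP_σ̃ implies HC∼. -/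
/-- weak trinity for hyperproperty preservation:
(1) HC∼ ↔ HP_τ̃; (2) Galois insertion implies HC∼ → HP_σ̃;
(3) Galois reflection implies HP_σ̃ → HC∼. -/
theorem hyper_weak_trinity {ProgS ProgT TraceS TraceT : Type*}
    (semS : ProgS → TraceS → Prop) (semT : ProgT → TraceT → Prop)
    (compile : ProgS → ProgT) (rel : TraceS → TraceT → Prop) :
    ((∀ W : ProgS, {t | semT (compile W) t} = exIm rel {s | semS W s}) ↔
      (∀ (W : ProgS) (HS : Set (Set TraceS)),
        {s | semS W s} ∈ HS → {t | semT (compile W) t} ∈ exIm rel '' HS)) ∧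
    ((∀ πT : Set TraceT, exIm rel (univIm rel πT) = πT) →
      (∀ W : ProgS, {t | semT (compile W) t} = exIm rel {s | semS W s}) →
      (∀ (W : ProgS) (HT : Set (Set TraceT)),
        {s | semS W s} ∈ univIm rel '' HT → {t | semT (compile W) t} ∈ HT)) ∧
    ((∀ πS : Set TraceS, univIm rel (exIm rel πS) = πS) →
      (∀ (W : ProgS) (HT : Set (Set TraceT)),
        {s | semS W s} ∈ univIm rel '' HT → {t | semT (compile W) t} ∈ HT) →
      (∀ W : ProgS, {t | semT (compile W) t} = exIm rel {s | semS W s})) := by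
  refine ⟨⟨fun hc W HS hmem => ⟨_, hmem, (hc W).symm⟩, fun hp W => ?_⟩,
    fun gi hc W HT hmem => ?_, fun gr hp W => ?_⟩
  · obtain ⟨π, hπ, heq⟩ := hp W {{s | semS W s}} (Set.mem_singleton _)
    simp only [Set.mem_singleton_iff] at hπ
    rw [← heq, hπ]
  · obtain ⟨πT, hπT, heq⟩ := hmem
    rw [hc W, ← heq, gi πT]; exact hπT
  · exact hp W {exIm rel {s | semS W s}} ⟨exIm rel {s | semS W s}, Set.mem_singleton _, gr _⟩
end

section
/- Let ∼ be a trace relation with σ̃ its universal image and Safe the smallest-safety-property closure on target properties. Then the safety criterion SC∼ (for every whole source program W and finite target prefix m, if ↓W produces a trace extending m, then there exist a target trace t extending m and a source trace s with s ∼ t and W ⇝ s) is equivalent to: for every W and target safety property π_T, if W satisfies σ̃(π_T) then ↓W satisfies π_T; and also equivalent to: for every W and arbitrary source property π_S, if W satisfies π_S then ↓W satisfies Safe(τ̃(π_S)). -/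
/-- trinity for safety: SC∼ ↔ SP_σ̃ and SC∼ ↔ (Safe ∘ τ̃)-preservation. -/
theorem safety_trinity {E : Type} {ProgS ProgT TraceS : Type}
    (semS : ProgS → TraceS → Prop) (semT : ProgT → Tr E → Prop)
    (compile : ProgS → ProgT) (rel : TraceS → Tr E → Prop) :
    ((∀ (W : ProgS) (m : List E),
        (∃ t, pref m t ∧ semT (compile W) t) →
        ∃ t, pref m t ∧ ∃ s, rel s t ∧ semS W s) ↔
      (∀ (W : ProgS) (πT : Set (Tr E)), SafetyT πT →
        (∀ s, semS W s → s ∈ {s | ∀ t, rel s t → t ∈ πT}) →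
        (∀ t, semT (compile W) t → t ∈ πT))) ∧
    ((∀ (W : ProgS) (m : List E),
        (∃ t, pref m t ∧ semT (compile W) t) →
        ∃ t, pref m t ∧ ∃ s, rel s t ∧ semS W s) ↔
      (∀ (W : ProgS) (πS : Set TraceS),
        (∀ s, semS W s → s ∈ πS) →
        (∀ t, semT (compile W) t → t ∈ Safe {t | ∃ s ∈ πS, rel s t}))) := by
  constructor
  · constructor
    · intro SC W πT hSafe hsat t ht
      by_contra htn
      obtain ⟨m, hm, hext⟩ := hSafe t htn
      obtain ⟨t', hpt', s, hrel, hsem⟩ := SC W m ⟨t, hm, ht⟩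
      exact hext t' hpt' (hsat s hsem t' hrel)
    · intro SP W m ⟨t, hpt, hsem⟩
      by_contra hno
      push_neg at hno
      have := SP W {t | ¬ pref m t}
        (fun t htn => by
          simp only [Set.mem_setOf_eq, not_not] at htn
          exact ⟨m, htn, fun t' hpt' h => h hpt'⟩)
        (fun s hs t' hrel hpt' => (hno t' hpt' s hrel) hs)
        t hsem
      exact this hpt
  · constructor
    · intro SC W πS hsat t ht S ⟨hS, hsub⟩
      by_contra htn
      obtain ⟨m, hm, hext⟩ := hS t htn
      obtain ⟨t', hpt', s, hrel, hsem⟩ := SC W m ⟨t, hm, ht⟩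
      exact hext t' hpt' (hsub ⟨s, hsat s hsem, hrel⟩)
    · intro TP W m ⟨t, hpt, hsem⟩
      by_contra hno
      push_neg at hno
      have := TP W {s | semS W s} (fun s hs => hs) t hsem
        {t | ¬ pref m t}
        ⟨fun t htn => by
          simp only [Set.mem_setOf_eq, not_not] at htn
          exact ⟨m, htn, fun t' hpt' h => h hpt'⟩,
         fun t' ⟨s, hs, hrel⟩ hpt' => (hno t' hpt' s hrel) hs⟩
      exact this hpt
end

section
/- Assume the trace relation ∼ decomposes into input and output relations (s ∼ t iff the input projections satisfy s° ∼° t° and the output projections satisfy s• ∼• t•), where ∼° and ∼• are total maps from target traces to source traces with ∼° surjective. Let f°(π°_T) = { s° | ∃ t° ∈ π°_T, s° ∼° t° } and g°(π°_S) = { t° | ∀ s°, s° ∼° t° → s° ∈ π°_S } (and f•, g• analogously). If a compiler ↓ satisfies CC∼ and a whole source program W satisfies abstract noninterference ANI with selection abstraction φ_S and observer abstraction ρ_S (i.e., for all traces s₁, s₂ of W, φ_S(s₁°) = φ_S(s₂°) implies ρ_S(s₁•) = ρ_S(s₂•)), then ↓W satisfies ANI with selection abstraction φ_T# = g° ∘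 φ_S ∘ f° and observer abstraction ρ_T# = g• ∘ ρ_S ∘ f•. -/
/-- `f` maps: a set of target items to the set of source items related to some
element of it (direct image along the target-to-source reading). -/
def fIm {A B : Type*} (r : A → B → Prop) (π : Set B) : Set A :=
  {a | ∃ b ∈ π, r a b}

/-- `g` maps: a set of source items to the set of target items all of whose
related source items lie in the set (universal image). -/
def gIm {A B : Type*} (r : A → B → Prop) (π : Set A) : Set B :=
  {b | ∀ a, r a b → a ∈ π}

/-- Compiling abstract noninterference (ANI): a CC∼ compiler maps
ANI(φ_S, ρ_S) programs to ANI(g° ∘ φ_S ∘ f°, g• ∘ ρ_S ∘ f•) programs. -/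
theorem compiling_ANI {ProgS ProgT TraceS TraceT InS InT OutS OutT : Type*}
    (semS : ProgS → TraceS → Prop) (semT : ProgT → TraceT → Prop)
    (compile : ProgS → ProgT)
    (inS : TraceS → InS) (outS : TraceS → OutS)
    (inT : TraceT → InT) (outT : TraceT → OutT)
    (relI : InS → InT → Prop) (relO : OutS → OutT → Prop)
    (htotI : ∀ it : InT, ∃! is_ : InS, relI is_ it)
    (hsurjI : ∀ is_ : InS, ∃ it : InT, relI is_ it)
    (htotO : ∀ ot : OutT, ∃! os : OutS, relO os ot)
    (φS : Set InS → Set InS) (ρS : Set OutS → Set OutS)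
    (hφmono : Monotone φS) (hφidem : ∀ π, φS (φS π) = φS π) (hφext : ∀ π, π ⊆ φS π)
    (hρmono : Monotone ρS) (hρidem : ∀ π, ρS (ρS π) = ρS π) (hρext : ∀ π, π ⊆ ρS π)
    (hCC : ∀ (W : ProgS) (t : TraceT), semT (compile W) t →
      ∃ s, semS W s ∧ relI (inS s) (inT t) ∧ relO (outS s) (outT t))
    (W : ProgS)
    (hANI : ∀ s₁ s₂, semS W s₁ → semS W s₂ →
      φS {inS s₁} = φS {inS s₂} → ρS {outS s₁} = ρS {outS s₂}) :
    ∀ t₁ t₂, semT (compile W) t₁ → semT (compile W) t₂ →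
      gIm relI (φS (fIm relI {inT t₁})) = gIm relI (φS (fIm relI {inT t₂})) →
      gIm relO (ρS (fIm relO {outT t₁})) = gIm relO (ρS (fIm relO {outT t₂})) := by
  intro t₁ t₂ h₁ h₂ heq
  obtain ⟨s₁, hs₁, hi₁, ho₁⟩ := hCC W t₁ h₁
  obtain ⟨s₂, hs₂, hi₂, ho₂⟩ := hCC W t₂ h₂
  -- fIm relI {inT tᵢ} = {inS sᵢ}
  have hfI : ∀ (s : TraceS) (t : TraceT), relI (inS s) (inT t) →
      fIm relI {inT t} = {inS s} := by
    intro s t h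
    ext a
    simp only [fIm, Set.mem_setOf_eq, Set.mem_singleton_iff]
    constructor
    · rintro ⟨b, hb, hab⟩
      obtain ⟨u, _, huniq⟩ := htotI (inT t)
      subst hb
      rw [huniq a hab, huniq (inS s) h]
    · rintro rfl; exact ⟨inT t, rfl, h⟩
  have hfO : ∀ (s : TraceS) (t : TraceT), relO (outS s) (outT t) →
      fIm relO {outT t} = {outS s} := by
    intro s t h
    ext a
    simp only [fIm, Set.mem_setOf_eq, Set.mem_singleton_iff]
    constructor
    · rintro ⟨b, hb, hab⟩
      obtain ⟨u, _, huniq⟩ := htotO (outT t)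
      subst hb
      rw [huniq a hab, huniq (outS s) h]
    · rintro rfl; exact ⟨outT t, rfl, h⟩
  -- fIm ∘ gIm = id for relI
  have hfg : ∀ π : Set InS, fIm relI (gIm relI π) = π := by
    intro π
    ext a
    simp only [fIm, gIm, Set.mem_setOf_eq]
    constructor
    · rintro ⟨b, hb, hab⟩; exact hb a hab
    · intro ha
      obtain ⟨b, hb⟩ := hsurjI a
      refine ⟨b, ?_, hb⟩
      intro a' ha'
      obtain ⟨u, _, huniq⟩ := htotI b
      rwa [huniq a' ha', ← huniq a hb]
  rw [hfI s₁ t₁ hi₁, hfI s₂ t₂ hi₂] at heq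
  have hφ : φS {inS s₁} = φS {inS s₂} := by
    have := congrArg (fIm relI) heq
    rwa [hfg, hfg] at this
  have hρ := hANI s₁ s₂ hs₁ hs₂ hφ
  rw [hfO s₁ t₁ ho₁, hfO s₂ t₂ ho₂, hρ]
end

section
/- Under the assumptions of the Compiling ANI theorem and additionally assuming the output relation ∼• is surjective (as a map from target outputs to source outputs), the target hyperproperty ANI(φ_T#, ρ_T#) is contained in Cl_⊆(τ̃(ANI(φ_S, ρ_S))), i.e., every target trace property in ANI(φ_T#, ρ_T#) is a subset of τ̃(π_S) for some source trace property π_S ∈ ANI(φ_S, ρ_S). -/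
lemma fIm_singleton {A B : Type*} (r : A → B → Prop)
    (htot : ∀ b : B, ∃! a : A, r a b) (b : B) :
    fIm r {b} = {(htot b).choose} := by
  ext a
  simp only [fIm, Set.mem_setOf_eq, Set.mem_singleton_iff]
  constructor
  · rintro ⟨b', hb', h⟩
    cases hb'
    exact (htot b).choose_spec.2 a h ▸ rfl
  · rintro rfl
    exact ⟨b, rfl, (htot b).choose_spec.1⟩

lemma gIm_mem {A B : Type*} (r : A → B → Prop)
    (htot : ∀ b : B, ∃! a : A, r a b) (π : Set A) (b : B) :
    b ∈ gIm r π ↔ (htot b).choose ∈ π := by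
  constructor
  · intro h; exact h _ (htot b).choose_spec.1
  · intro h a ha
    rwa [(htot b).choose_spec.2 a ha]

lemma gIm_inj {A B : Type*} (r : A → B → Prop)
    (htot : ∀ b : B, ∃! a : A, r a b) (hsurj : ∀ a : A, ∃ b : B, r a b)
    (π₁ π₂ : Set A) (h : gIm r π₁ = gIm r π₂) : π₁ = π₂ := by
  ext a
  obtain ⟨b, hb⟩ := hsurj a
  have hc : (htot b).choose = a := ((htot b).choose_spec.2 a hb).symm
  constructor
  · intro ha
    have : b ∈ gIm r π₁ := (gIm_mem r htot π₁ b).2 (hc ▸ ha)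
    have := (gIm_mem r htot π₂ b).1 (h ▸ this)
    rwa [hc] at this
  · intro ha
    have : b ∈ gIm r π₂ := (gIm_mem r htot π₂ b).2 (hc ▸ ha)
    have := (gIm_mem r htot π₁ b).1 (h ▸ this)
    rwa [hc] at this

/-- every target property in ANI(φ_T#, ρ_T#) is contained in
τ̃(π_S) for some π_S ∈ ANI(φ_S, ρ_S), i.e. ANI(φ_T#, ρ_T#) ⊆ Cl_⊆(τ̃(ANI(φ_S, ρ_S))).
Traces are pairs of input and output projections. -/
theorem ANI_containment {InS InT OutS OutT : Type*}
    (relI : InS → InT → Prop) (relO : OutS → OutT → Prop)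
    (htotI : ∀ it : InT, ∃! is_ : InS, relI is_ it)
    (hsurjI : ∀ is_ : InS, ∃ it : InT, relI is_ it)
    (htotO : ∀ ot : OutT, ∃! os : OutS, relO os ot)
    (hsurjO : ∀ os : OutS, ∃ ot : OutT, relO os ot)
    (φS : Set InS → Set InS) (ρS : Set OutS → Set OutS)
    (hφmono : Monotone φS) (hφidem : ∀ π, φS (φS π) = φS π) (hφext : ∀ π, π ⊆ φS π)
    (hρmono : Monotone ρS) (hρidem : ∀ π, ρS (ρS π) = ρS π) (hρext : ∀ π, π ⊆ ρS π) :
    ∀ πT : Set (InT × OutT),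
      (∀ t₁ ∈ πT, ∀ t₂ ∈ πT,
        gIm relI (φS (fIm relI {t₁.1})) = gIm relI (φS (fIm relI {t₂.1})) →
        gIm relO (ρS (fIm relO {t₁.2})) = gIm relO (ρS (fIm relO {t₂.2}))) →
      ∃ πS : Set (InS × OutS),
        (∀ s₁ ∈ πS, ∀ s₂ ∈ πS, φS {s₁.1} = φS {s₂.1} → ρS {s₁.2} = ρS {s₂.2}) ∧
        πT ⊆ {t | ∃ s ∈ πS, relI s.1 t.1 ∧ relO s.2 t.2} := by
  intro πT hANI
  set σI : InT → InS := fun it => (htotI it).choose with hσI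
  set σO : OutT → OutS := fun ot => (htotO ot).choose with hσO
  refine ⟨(fun t => (σI t.1, σO t.2)) '' πT, ?_, ?_⟩
  · rintro s₁ ⟨t₁, ht₁, rfl⟩ s₂ ⟨t₂, ht₂, rfl⟩ hφ
    simp only at hφ ⊢
    have key := hANI t₁ ht₁ t₂ ht₂
    rw [fIm_singleton relI htotI t₁.1, fIm_singleton relI htotI t₂.1,
        fIm_singleton relO htotO t₁.2, fIm_singleton relO htotO t₂.2] at key
    have := key (by rw [hφ])
    exact gIm_inj relO htotO hsurjO _ _ this
  · intro t ht
    exact ⟨(σI t.1, σO t.2), ⟨t, ht, rfl⟩, (htotI t.1).choose_spec.1,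
      (htotO t.2).choose_spec.1⟩
end

section
/- Let ∼° ⊆ InputS × InputT be a total surjective map from target inputs to source inputs and ∼• a total surjective map from source outputs to target outputs, with τ̃°, σ̃°, τ̃•, σ̃• the corresponding existential/universal images. Suppose φ_T is a target selection abstraction satisfying: for all s, t, if s° ∼° t° then φ_T(t°) = φ_T(τ̃°(s°)). If ↓ is a CC∼ compiler and the source program W satisfies ANI(φ_S#, ρ_S#) where φ_S# = σ̃° ∘ φ_T ∘ τ̃° and ρ_S# = σ̃• ∘ ρ_T ∘ τ̃•, then ↓W satisfies ANI(φ_T, ρ_T). -/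
/-- Existential image from source sets to target sets. -/
def tIm {A B : Type*} (r : A → B → Prop) (π : Set A) : Set B :=
  {b | ∃ a ∈ π, r a b}

/-- Universal image from target sets to source sets. -/
def sIm {A B : Type*} (r : A → B → Prop) (π' : Set B) : Set A :=
  {a | ∀ b, r a b → b ∈ π'}

/-- target ANI from source ANI. Traces are pairs of input and
output projections; `relI` is a total surjective map from target inputs to
source inputs, `relO` a total surjective map from source outputs to target
outputs, and the target selection abstraction `φT` is representable in the
source. -/
theorem target_ANI_by_source_ANI {ProgS ProgT InS InT OutS OutT : Type*}
    (semS : ProgS → (InS × OutS) → Prop) (semT : ProgT → (InT × OutT) → Prop)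
    (compile : ProgS → ProgT)
    (relI : InS → InT → Prop) (relO : OutS → OutT → Prop)
    (htotI : ∀ it : InT, ∃! is_ : InS, relI is_ it)
    (hsurjI : ∀ is_ : InS, ∃ it : InT, relI is_ it)
    (htotO : ∀ os : OutS, ∃! ot : OutT, relO os ot)
    (hsurjO : ∀ ot : OutT, ∃ os : OutS, relO os ot)
    (φT : Set InT → Set InT) (ρT : Set OutT → Set OutT)
    (hφmono : Monotone φT) (hφidem : ∀ π, φT (φT π) = φT π) (hφext : ∀ π, π ⊆ φT π)
    (hρmono : Monotone ρT) (hρidem : ∀ π, ρT (ρT π) = ρT π) (hρext : ∀ π, π ⊆ ρT π)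
    (hφrep : ∀ (sIn : InS) (tIn : InT), relI sIn tIn →
      φT {tIn} = φT (tIm relI {sIn}))
    (hCC : ∀ (W : ProgS) (t : InT × OutT), semT (compile W) t →
      ∃ s : InS × OutS, semS W s ∧ relI s.1 t.1 ∧ relO s.2 t.2)
    (W : ProgS)
    (hANI : ∀ s₁ s₂, semS W s₁ → semS W s₂ →
      sIm relI (φT (tIm relI {s₁.1})) = sIm relI (φT (tIm relI {s₂.1})) →
      sIm relO (ρT (tIm relO {s₁.2})) = sIm relO (ρT (tIm relO {s₂.2}))) :
    ∀ t₁ t₂, semT (compile W) t₁ → semT (compile W) t₂ →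
      φT {t₁.1} = φT {t₂.1} → ρT {t₁.2} = ρT {t₂.2} := by
  intro t₁ t₂ h₁ h₂ hφ
  obtain ⟨s₁, hs₁, hI₁, hO₁⟩ := hCC W t₁ h₁
  obtain ⟨s₂, hs₂, hI₂, hO₂⟩ := hCC W t₂ h₂
  -- singleton existential image of output equals singleton target
  have himO : ∀ (os : OutS) (ot : OutT), relO os ot → tIm relO {os} = {ot} := by
    intro os ot hrel
    obtain ⟨ot', h1, h2⟩ := htotO os
    ext x
    constructor
    · rintro ⟨a, ha, hax⟩
      rcases ha with rfl
      have : x = ot := (h2 x hax).trans (h2 ot hrel).symm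
      simp [this]
    · rintro rfl
      exact ⟨os, rfl, hrel⟩
  have key := hANI s₁ s₂ hs₁ hs₂ (by
    rw [← hφrep s₁.1 t₁.1 hI₁, ← hφrep s₂.1 t₂.1 hI₂, hφ])
  rw [himO s₁.2 t₁.2 hO₁, himO s₂.2 t₂.2 hO₂] at key
  -- from equality of universal preimages and surjectivity, get equality
  have step : ∀ X Y : Set OutT, sIm relO X = sIm relO Y → X ⊆ Y := by
    intro X Y hXY ot hot
    obtain ⟨os, hos⟩ := hsurjO ot
    obtain ⟨ot', h1, h2⟩ := htotO os
    have hmem : os ∈ sIm relO X := by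
      intro b hb
      have : b = ot := (h2 b hb).trans (h2 ot hos).symm
      simpa [this] using hot
    have : os ∈ sIm relO Y := hXY ▸ hmem
    exact this ot hos
  exact Set.Subset.antisymm (step _ _ key) (step _ _ key.symm)
end
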